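/- arXiv:1805.01861 — 4 statements merged into one kernel-verified Lean document; each statement's English description precedes it below -/
import Mathlib

section
/- For continuous positive functions f, g on [a,b] with a ≤ b, and s ∈ [0,1], the star-integral of s·f(x) + (1-s)·g(x) over [a,b] is greater than or equal to the product of the star-integral of f(x)^s over [a,b] and the star-integral of g(x)^{1-s} over [a,b]. -/
/-! Pointwise, weighted AM–GM (concavity of `log`) gives
`f ^ s * g ^ (1 - s) ≤ s * f + (1 - s) * g`. The star-integral is multiplicative on positive
functions and monotone, so the pointwise inequality passes to star-integrals. -/

open Real Set MeasureTheory intervalIntegral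

noncomputable def starIntegral (h : ℝ → ℝ) (a b : ℝ) : ℝ :=
  exp (∫ x in a..b, log (h x))

section

variable {u v w : ℝ → ℝ} {a b : ℝ}

theorem intervalIntegrable_log_of_continuousOn {μ : Measure ℝ} [IsLocallyFiniteMeasure μ]
    (hu : ContinuousOn u (uIcc a b)) (hu0 : ∀ x ∈ uIcc a b, u x ≠ 0) :
    IntervalIntegrable (fun x => log (u x)) μ a b :=
  (hu.log hu0).intervalIntegrable

theorem starIntegral_mul (hu : IntervalIntegrable (fun x => log (u x)) volume a b)
    (hv : IntervalIntegrable (fun x => log (v x)) volume a b)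
    (hu0 : ∀ x ∈ uIcc a b, u x ≠ 0) (hv0 : ∀ x ∈ uIcc a b, v x ≠ 0) :
    starIntegral (fun x => u x * v x) a b = starIntegral u a b * starIntegral v a b := by
  rw [starIntegral, starIntegral, starIntegral, ← exp_add, ← integral_add hu hv]
  exact congrArg exp (integral_congr fun x hx => log_mul (hu0 x hx) (hv0 x hx))

theorem starIntegral_mono (hab : a ≤ b) (hu : IntervalIntegrable (fun x => log (u x)) volume a b)
    (hw : IntervalIntegrable (fun x => log (w x)) volume a b)
    (hu0 : ∀ x ∈ Icc a b, 0 < u x) (huw : ∀ x ∈ Icc a b, u x ≤ w x) :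
    starIntegral u a b ≤ starIntegral w a b :=
  exp_le_exp.2 <| integral_mono_on hab hu hw fun x hx => log_le_log (hu0 x hx) (huw x hx)

end

theorem star_integral_holder (a b : ℝ) (hab : a ≤ b) (f g : ℝ → ℝ) (s : ℝ)
    (hs : s ∈ Set.Icc (0 : ℝ) 1)
    (hf : ContinuousOn f (Set.Icc a b)) (hg : ContinuousOn g (Set.Icc a b))
    (hfpos : ∀ x ∈ Set.Icc a b, 0 < f x) (hgpos : ∀ x ∈ Set.Icc a b, 0 < g x) :
    Real.exp (∫ x in a..b, Real.log (s * f x + (1 - s) * g x))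
      ≥ Real.exp (∫ x in a..b, Real.log (f x ^ s))
        * Real.exp (∫ x in a..b, Real.log (g x ^ (1 - s))) := by
  obtain ⟨hs0, hs1⟩ := hs
  have hI : uIcc a b = Icc a b := uIcc_of_le hab
  have hlog : ∀ h : ℝ → ℝ, ContinuousOn h (Icc a b) → (∀ x ∈ Icc a b, 0 < h x) →
      IntervalIntegrable (fun x => log (h x)) volume a b := fun h hc hpos =>
    intervalIntegrable_log_of_continuousOn (hI ▸ hc) fun x hx => (hpos x (hI ▸ hx)).ne'
  have hfs : ∀ x ∈ Icc a b, 0 < f x ^ s := fun x hx => rpow_pos_of_pos (hfpos x hx) s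
  have hgs : ∀ x ∈ Icc a b, 0 < g x ^ (1 - s) := fun x hx => rpow_pos_of_pos (hgpos x hx) _
  have hfs_cont : ContinuousOn (fun x => f x ^ s) (Icc a b) :=
    hf.rpow_const fun _ _ => Or.inr hs0
  have hgs_cont : ContinuousOn (fun x => g x ^ (1 - s)) (Icc a b) :=
    hg.rpow_const fun _ _ => Or.inr (sub_nonneg.2 hs1)
  have amgm : ∀ x ∈ Icc a b, f x ^ s * g x ^ (1 - s) ≤ s * f x + (1 - s) * g x := fun x hx =>
    geom_mean_le_arith_mean2_weighted hs0 (sub_nonneg.2 hs1) (hfpos x hx).le (hgpos x hx).le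
      (by ring)
  have hprod : ∀ x ∈ Icc a b, 0 < f x ^ s * g x ^ (1 - s) := fun x hx =>
    mul_pos (hfs x hx) (hgs x hx)
  show starIntegral (fun x => f x ^ s) a b * starIntegral (fun x => g x ^ (1 - s)) a b
    ≤ starIntegral (fun x => s * f x + (1 - s) * g x) a b
  rw [← starIntegral_mul (hlog _ hfs_cont hfs) (hlog _ hgs_cont hgs)
    (fun x hx => (hfs x (hI ▸ hx)).ne') fun x hx => (hgs x (hI ▸ hx)).ne']
  exact starIntegral_mono hab (hlog _ (hfs_cont.mul hgs_cont) hprod)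
    (hlog _ ((continuousOn_const.mul hf).add (continuousOn_const.mul hg)) fun x hx =>
      (hprod x hx).trans_le (amgm x hx)) hprod amgm
end

section
/- For continuous positive functions f, g on [a,b] with a ≤ b, the star-integral of f(x) + g(x) over [a,b] is greater than or equal to 2^{b-a} times the square root of the star-integral of f(x)·g(x) over [a,b]. -/
theorem star_integral_cauchy_schwarz (a b : ℝ) (hab : a ≤ b) (f g : ℝ → ℝ)
    (hf : ContinuousOn f (Set.Icc a b)) (hg : ContinuousOn g (Set.Icc a b))
    (hfpos : ∀ x ∈ Set.Icc a b, 0 < f x) (hgpos : ∀ x ∈ Set.Icc a b, 0 < g x) :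
    Real.exp (∫ x in a..b, Real.log (f x + g x))
      ≥ (2 : ℝ) ^ (b - a) * Real.sqrt (Real.exp (∫ x in a..b, Real.log (f x * g x))) := by
  have hI1 : IntervalIntegrable (fun x => Real.log (f x + g x)) MeasureTheory.volume a b := by
    apply ContinuousOn.intervalIntegrable
    rw [Set.uIcc_of_le hab]
    exact ContinuousOn.log (hf.add hg) fun x hx =>
      ne_of_gt (add_pos (hfpos x hx) (hgpos x hx))
  have hI2 : IntervalIntegrable (fun x => Real.log (f x * g x)) MeasureTheory.volume a b := by
    apply ContinuousOn.intervalIntegrable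
    rw [Set.uIcc_of_le hab]
    exact ContinuousOn.log (hf.mul hg) fun x hx =>
      ne_of_gt (mul_pos (hfpos x hx) (hgpos x hx))
  have key : ∫ x in a..b, (Real.log 2 + (1/2) * Real.log (f x * g x))
      ≤ ∫ x in a..b, Real.log (f x + g x) := by
    apply intervalIntegral.integral_mono_on hab _ hI1
    · intro x hx
      have hf' := hfpos x hx
      have hg' := hgpos x hx
      have h2 : 2 * Real.sqrt (f x * g x) ≤ f x + g x := by
        have := sq_nonneg (Real.sqrt (f x) - Real.sqrt (g x))
        have hfe : Real.sqrt (f x) ^ 2 = f x := Real.sq_sqrt hf'.le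
        have hge : Real.sqrt (g x) ^ 2 = g x := Real.sq_sqrt hg'.le
        have hmul : Real.sqrt (f x) * Real.sqrt (g x) = Real.sqrt (f x * g x) :=
          (Real.sqrt_mul hf'.le _).symm
        nlinarith
      have hpos : 0 < 2 * Real.sqrt (f x * g x) :=
        mul_pos two_pos (Real.sqrt_pos.mpr (mul_pos hf' hg'))
      calc Real.log 2 + (1/2) * Real.log (f x * g x)
          = Real.log (2 * Real.sqrt (f x * g x)) := by
            rw [Real.log_mul two_ne_zero (ne_of_gt (Real.sqrt_pos.mpr (mul_pos hf' hg'))),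
              Real.log_sqrt (mul_pos hf' hg').le]
            ring
        _ ≤ Real.log (f x + g x) := Real.log_le_log hpos h2
    · exact (intervalIntegrable_const).add (hI2.const_mul _)
  have hlhs : ∫ x in a..b, (Real.log 2 + (1/2) * Real.log (f x * g x))
      = (b - a) * Real.log 2 + (1/2) * ∫ x in a..b, Real.log (f x * g x) := by
    rw [intervalIntegral.integral_add intervalIntegrable_const (hI2.const_mul _),
      intervalIntegral.integral_const, intervalIntegral.integral_const_mul, smul_eq_mul]
  have hsqrt : ∀ t : ℝ, Real.sqrt (Real.exp t) = Real.exp (t/2) := by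
    intro t
    have h : Real.exp t = Real.exp (t/2) * Real.exp (t/2) := by
      rw [← Real.exp_add]; ring_nf
    rw [h, Real.sqrt_mul_self (Real.exp_nonneg _)]
  have hrhs : (2 : ℝ) ^ (b - a) * Real.sqrt (Real.exp (∫ x in a..b, Real.log (f x * g x)))
      = Real.exp ((b - a) * Real.log 2 + (1/2) * ∫ x in a..b, Real.log (f x * g x)) := by
    rw [Real.exp_add, Real.rpow_def_of_pos two_pos, hsqrt]
    ring_nf
  rw [ge_iff_le, hrhs]
  exact Real.exp_le_exp.mpr (hlhs ▸ key)
end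

section
/- For all positive reals a_1 ≤ a_2 ≤ ... ≤ a_{k+1} and all natural numbers k ≥ 1, (∑_{i=1}^{k+1} a_i)^{2^{k-1}} ≥ 2^{2^k - 1} · √(a_1) · ∏_{i=1}^{k} a_{i+1}^{2^{i-2}}. -/
/-!
Induction on `k`, starting from `2 √a₁ √a₂ ≤ a₁ + a₂`. Writing `S` for the sum of the first
`k + 1` terms and `b = a_{k+2}`, AM-GM gives
`(S + b)^{2^k} = ((S + b)^2)^{2^{k-1}} ≥ 4^{2^{k-1}} S^{2^{k-1}} b^{2^{k-1}}`;
the factor `4^{2^{k-1}} = 2^{2^k}` raises the constant from `2^{2^k - 1}` to `2^{2^{k+1} - 1}`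
and `b^{2^{k-1}}` is exactly the new factor of the product.
-/

open Finset Real

lemma four_pow_mul_mul_pow_le_add_pow_two_mul {x y c : ℝ} (hx : 0 ≤ x) (hy : 0 ≤ y) {n : ℕ}
    (hc : c ≤ x ^ n) : 4 ^ n * c * y ^ n ≤ (x + y) ^ (2 * n) := calc
  4 ^ n * c * y ^ n ≤ 4 ^ n * x ^ n * y ^ n := by gcongr
  _ = (4 * x * y) ^ n := by rw [mul_pow, mul_pow]
  _ ≤ ((x + y) ^ 2) ^ n := by gcongr; exact four_mul_le_sq_add x y
  _ = (x + y) ^ (2 * n) := by rw [pow_mul]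

lemma two_mul_sqrt_mul_sqrt_le_add {x y : ℝ} (hx : 0 ≤ x) (hy : 0 ≤ y) :
    2 * √x * √y ≤ x + y := by
  simpa [sq_sqrt hx, sq_sqrt hy] using two_mul_le_add_sq √x √y

lemma rpow_two_zpow_natCast_sub_two (x : ℝ) (m : ℕ) :
    x ^ (2 : ℝ) ^ (((m + 2 : ℕ) : ℤ) - 2) = x ^ 2 ^ m := by
  rw [show ((m + 2 : ℕ) : ℤ) - 2 = m by push_cast; ring, zpow_natCast, ← Nat.cast_ofNat,
    ← Nat.cast_pow, rpow_natCast]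

lemma two_pow_two_pow_add_two_sub_one (m : ℕ) :
    (2 : ℝ) ^ (2 ^ (m + 2) - 1) = 4 ^ 2 ^ m * 2 ^ (2 ^ (m + 1) - 1) := by
  have : 2 ^ (m + 2) - 1 = 2 * 2 ^ m + (2 ^ (m + 1) - 1) := by
    have := Nat.one_le_two_pow (n := m); rw [pow_succ, pow_succ]; omega
  rw [this, pow_add, pow_mul]; norm_num

theorem two_pow_mul_sqrt_mul_prod_le_sum_pow (a : ℕ → ℝ) (m : ℕ)
    (ha : ∀ i ∈ Icc 1 (m + 2), 0 ≤ a i) :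
    2 ^ (2 ^ (m + 1) - 1) * √(a 1) * ∏ i ∈ Icc 1 (m + 1), a (i + 1) ^ (2 : ℝ) ^ ((i : ℤ) - 2)
      ≤ (∑ i ∈ Icc 1 (m + 2), a i) ^ 2 ^ m := by
  induction m with
  | zero =>
    have h1 := ha 1 (by simp)
    have h2 := ha 2 (by simp)
    simpa [sqrt_eq_rpow, sum_Icc_succ_top] using two_mul_sqrt_mul_sqrt_le_add h1 h2
  | succ m ih =>
    have ha' : ∀ i ∈ Icc 1 (m + 2), 0 ≤ a i := fun i hi ↦
      ha i (Icc_subset_Icc_right (by omega) hi)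
    rw [prod_Icc_succ_top (by omega), sum_Icc_succ_top (by omega),
      rpow_two_zpow_natCast_sub_two, two_pow_two_pow_add_two_sub_one]
    calc _ = 4 ^ 2 ^ m * (2 ^ (2 ^ (m + 1) - 1) * √(a 1) *
            ∏ i ∈ Icc 1 (m + 1), a (i + 1) ^ (2 : ℝ) ^ ((i : ℤ) - 2)) * a (m + 3) ^ 2 ^ m := by
          ring
      _ ≤ _ := four_pow_mul_mul_pow_le_add_pow_two_mul (sum_nonneg ha')
          (ha _ (by simp)) (ih ha')
      _ = _ := by rw [pow_succ', pow_mul]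

theorem generalized_star_ineq_general (k : ℕ) (hk : 1 ≤ k) (a : ℕ → ℝ)
    (hpos : ∀ i ∈ Finset.Icc 1 (k + 1), 0 < a i) :
    (∑ i ∈ Finset.Icc 1 (k + 1), a i) ^ (2 ^ (k - 1))
      ≥ 2 ^ (2 ^ k - 1) * Real.sqrt (a 1)
        * ∏ i ∈ Finset.Icc 1 k, a (i + 1) ^ ((2 : ℝ) ^ ((i : ℤ) - 2)) := by
  obtain ⟨m, rfl⟩ := Nat.exists_eq_add_of_le' hk
  exact two_pow_mul_sqrt_mul_prod_le_sum_pow a m fun i hi ↦ (hpos i hi).le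

theorem generalized_star_ineq (k : ℕ) (hk : 1 ≤ k) (a : ℕ → ℝ)
    (hpos : ∀ i ∈ Finset.Icc 1 (k + 1), 0 < a i)
    (hmono : ∀ i j, 1 ≤ i → i ≤ j → j ≤ k + 1 → a i ≤ a j) :
    (∑ i ∈ Finset.Icc 1 (k + 1), a i) ^ (2 ^ (k - 1))
      ≥ 2 ^ (2 ^ k - 1) * Real.sqrt (a 1)
        * ∏ i ∈ Finset.Icc 1 k, a (i + 1) ^ ((2 : ℝ) ^ ((i : ℤ) - 2)) :=
  generalized_star_ineq_general k hk a hpos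
end

section
/- For all natural numbers k ≥ 1, (k+1)^{2^{k-1}} ≥ 2^{2^k - 1}. -/
/-! Writing `k = n + 1`, the claim is `2 ^ (2 ^ (n + 1) - 1) ≤ (n + 2) ^ 2 ^ n`, proved by induction
on `n`: squaring the bound for `n` gives `2 ^ (2 ^ (n + 2) - 2) ≤ (n + 2) ^ 2 ^ (n + 1)`, and the
missing factor `2` comes from Bernoulli's inequality `(1 + 1 / (n + 2)) ^ N ≥ 2` for
`N = 2 ^ (n + 1) ≥ n + 2`. -/

lemma two_mul_pow_le_succ_pow {a n : ℕ} (ha : 0 < a) (han : a ≤ n) :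
    2 * a ^ n ≤ (a + 1) ^ n := by
  have hn : n = n - 1 + 1 := by omega
  have hpow : a ^ n ≤ n * a ^ (n - 1) := by
    rw [hn, pow_succ', Nat.add_sub_cancel, ← hn]
    exact Nat.mul_le_mul_right _ han
  have bernoulli : a ^ n + n * a ^ (n - 1) * 1 ≤ (a + 1) ^ n :=
    pow_add_mul_le_add_pow (Nat.zero_le a) (Nat.zero_le _) n
  omega

lemma two_pow_two_pow_sub_one_le (n : ℕ) : 2 ^ (2 ^ (n + 1) - 1) ≤ (n + 2) ^ 2 ^ n := by
  induction n with
  | zero => norm_num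
  | succ n ih =>
    have hexp : 2 ^ (n + 2) - 1 = 2 * (2 ^ (n + 1) - 1) + 1 := by
      have := Nat.one_le_two_pow (n := n + 1)
      rw [pow_succ 2 (n + 1)]
      omega
    have hN : n + 2 ≤ 2 ^ (n + 1) := Nat.lt_two_pow_self
    calc 2 ^ (2 ^ (n + 2) - 1) = 2 * (2 ^ (2 ^ (n + 1) - 1)) ^ 2 := by
          rw [hexp, pow_succ, ← pow_mul, mul_comm 2, mul_comm]
      _ ≤ 2 * ((n + 2) ^ 2 ^ n) ^ 2 := by gcongr
      _ = 2 * (n + 2) ^ 2 ^ (n + 1) := by rw [← pow_mul, ← pow_succ]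
      _ ≤ (n + 1 + 2) ^ 2 ^ (n + 1) := two_mul_pow_le_succ_pow (by omega) hN

theorem pow_ineq_general (k : ℕ) :
    (k + 1) ^ (2 ^ (k - 1)) ≥ 2 ^ (2 ^ k - 1) := by
  cases k with
  | zero => norm_num
  | succ n => simpa using two_pow_two_pow_sub_one_le n

theorem pow_ineq (k : ℕ) (hk : 1 ≤ k) :
    (k + 1) ^ (2 ^ (k - 1)) ≥ 2 ^ (2 ^ k - 1) :=
  pow_ineq_general k
end
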